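/- Choquet integral minimum representation: if m is a supermodular capacity on a nonempty finite set Ω, then for every f : Ω → ℝ the discrete Choquet integral satisfies (C)∫ f dm = min_{P ∈ core(m)} E_P[f], i.e., there exists P* ∈ core(m) with E_{P*}[f] = (C)∫ f dm and (C)∫ f dm ≤ E_P[f] for every P ∈ core(m). -/

import Mathlib

open Finset Filter

/-- A capacity on a finite type `Ω`: a normalized monotone set function. -/
def IsCapacity {Ω : Type*} [Fintype Ω] (m : Finset Ω → ℝ) : Prop :=
  m ∅ = 0 ∧ m Finset.univ = 1 ∧ ∀ ⦃A B : Finset Ω⦄, A ⊆ B → m A ≤ m B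

/-- The initial segment `{σ 0, …, σ (k-1)}` of an enumeration `σ` of `Ω`. -/
def prefSet {Ω : Type*} [Fintype Ω] [DecidableEq Ω]
    (σ : Fin (Fintype.card Ω) ≃ Ω) (k : ℕ) : Finset Ω :=
  (Finset.univ.filter fun j : Fin (Fintype.card Ω) => (j : ℕ) < k).image σ

/-- The Choquet sum of `f` against `m` along an enumeration `σ` of `Ω`. -/
def choquetSum {Ω : Type*} [Fintype Ω] [DecidableEq Ω]
    (m : Finset Ω → ℝ) (f : Ω → ℝ) (σ : Fin (Fintype.card Ω) ≃ Ω) : ℝ :=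
  ∑ i : Fin (Fintype.card Ω),
    f (σ i) * (m (prefSet σ ((i : ℕ) + 1)) - m (prefSet σ (i : ℕ)))

/-- An enumeration of `Ω` along which `f` is weakly decreasing. -/
noncomputable def sortedEquiv {Ω : Type*} [Fintype Ω] (f : Ω → ℝ) :
    Fin (Fintype.card Ω) ≃ Ω :=
  (Tuple.sort fun i => -f ((Fintype.equivFin Ω).symm i)).trans
    (Fintype.equivFin Ω).symm

/-- The discrete Choquet integral of `f` with respect to `m`. -/
noncomputable def choquet {Ω : Type*} [Fintype Ω] [DecidableEq Ω]
    (m : Finset Ω → ℝ) (f : Ω → ℝ) : ℝ :=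
  choquetSum m f (sortedEquiv f)

/-- The dual capacity `m'(A) = 1 - m(Ω \ A)`. -/
def dualCap {Ω : Type*} [Fintype Ω] [DecidableEq Ω]
    (m : Finset Ω → ℝ) (A : Finset Ω) : ℝ :=
  1 - m Aᶜ

/-- Supermodularity: `m(A ∪ B) + m(A ∩ B) ≥ m(A) + m(B)`. -/
def IsSupermodular {Ω : Type*} [DecidableEq Ω] (m : Finset Ω → ℝ) : Prop :=
  ∀ A B : Finset Ω, m A + m B ≤ m (A ∪ B) + m (A ∩ B)

/-- Submodularity: `m(A ∪ B) + m(A ∩ B) ≤ m(A) + m(B)`. -/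
def IsSubmodular {Ω : Type*} [DecidableEq Ω] (m : Finset Ω → ℝ) : Prop :=
  ∀ A B : Finset Ω, m (A ∪ B) + m (A ∩ B) ≤ m A + m B

/-- A probability vector on a finite type `Ω`. -/
def IsProbVector {Ω : Type*} [Fintype Ω] (P : Ω → ℝ) : Prop :=
  (∀ ω, 0 ≤ P ω) ∧ ∑ ω, P ω = 1

/-- Membership in the core of a capacity `m`. -/
def memCore {Ω : Type*} [Fintype Ω] (m : Finset Ω → ℝ) (P : Ω → ℝ) : Prop :=
  IsProbVector P ∧ ∀ A : Finset Ω, m A ≤ ∑ ω ∈ A, P ω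

/-- The λ-rule set function `m_λ(A) = (∏_{ω ∈ A} (1 + λ g(ω)) - 1) / λ`. -/
noncomputable def mLam {Ω : Type*} (lam : ℝ) (g : Ω → ℝ) (A : Finset Ω) : ℝ :=
  ((∏ ω ∈ A, (1 + lam * g ω)) - 1) / lam

/-! Along an enumeration `σ` that sorts `f` decreasingly, the Choquet sum is the expectation of
`f` under the marginal vector `P_σ(σ i) = m {σ 0, …, σ i} - m {σ 0, …, σ (i-1)}`. Supermodularity
says that marginal gains `m (insert x A) - m A` grow with `A`, which puts `P_σ` in the core.
Conversely, for `P` in the core, `E_P[f]` minus the Choquet integral is the Choquet sum of the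
set function `P - m`; Abel summation writes it as a combination of the nonnegative values of
`P - m` on prefixes with the nonnegative weights `f (σ i) - f (σ (i+1))`. -/

theorem IsSupermodular.insert_sub_le_insert_sub {Ω : Type*} [DecidableEq Ω] {m : Finset Ω → ℝ}
    (hm : IsSupermodular m) {A B : Finset Ω} {x : Ω} (hAB : A ⊆ B) (hx : x ∉ B) :
    m (insert x A) - m A ≤ m (insert x B) - m B := by
  have := hm (insert x A) B
  rw [insert_union, union_eq_right.2 hAB, insert_inter_of_notMem hx, inter_eq_left.2 hAB] at this
  linarith

section Choquet

variable {Ω : Type*} [Fintype Ω] [DecidableEq Ω] (σ : Fin (Fintype.card Ω) ≃ Ω)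

theorem mem_prefSet {k : ℕ} {ω : Ω} : ω ∈ prefSet σ k ↔ (σ.symm ω : ℕ) < k := by
  simp only [prefSet, mem_image, mem_filter, mem_univ, true_and]
  constructor
  · rintro ⟨j, hj, rfl⟩
    simpa using hj
  · exact fun h => ⟨σ.symm ω, h, σ.apply_symm_apply ω⟩

@[simp]
theorem prefSet_zero : prefSet σ 0 = ∅ := by
  ext ω
  simp [mem_prefSet]

@[simp]
theorem prefSet_card : prefSet σ (Fintype.card Ω) = univ := by
  ext ω
  simp [mem_prefSet]

theorem prefSet_succ (i : Fin (Fintype.card Ω)) :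
    prefSet σ (i + 1) = insert (σ i) (prefSet σ i) := by
  ext ω
  rw [mem_insert, mem_prefSet, mem_prefSet, Nat.lt_succ_iff_lt_or_eq, Fin.val_inj,
    σ.symm_apply_eq, or_comm]

theorem apply_notMem_prefSet (i : Fin (Fintype.card Ω)) : σ i ∉ prefSet σ i := by
  simp [mem_prefSet]

def marginalVector (m : Finset Ω → ℝ) (ω : Ω) : ℝ :=
  m (prefSet σ ((σ.symm ω : ℕ) + 1)) - m (prefSet σ (σ.symm ω))

theorem marginalVector_apply (m : Finset Ω → ℝ) (i : Fin (Fintype.card Ω)) :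
    marginalVector σ m (σ i) = m (prefSet σ (i + 1)) - m (prefSet σ i) := by
  simp [marginalVector]

theorem choquetSum_eq_sum_marginalVector_mul (m : Finset Ω → ℝ) (f : Ω → ℝ) :
    choquetSum m f σ = ∑ ω, marginalVector σ m ω * f ω := by
  rw [choquetSum, ← σ.sum_comp]
  simp only [marginalVector_apply, mul_comm]

theorem sum_marginalVector (m : Finset Ω → ℝ) : ∑ ω, marginalVector σ m ω = m univ - m ∅ := by
  rw [← σ.sum_comp]
  simp only [marginalVector_apply]
  rw [Fin.sum_univ_eq_sum_range (fun i => m (prefSet σ (i + 1)) - m (prefSet σ i)),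
    sum_range_sub (fun i => m (prefSet σ i)), prefSet_card, prefSet_zero]

theorem marginalVector_nonneg {m : Finset Ω → ℝ} (hm : Monotone m) (ω : Ω) :
    0 ≤ marginalVector σ m ω := by
  rw [← σ.apply_symm_apply ω, marginalVector_apply, sub_nonneg, prefSet_succ]
  exact hm (subset_insert _ _)

theorem marginalVector_sum (P : Ω → ℝ) : marginalVector σ (fun A => ∑ ω ∈ A, P ω) = P := by
  funext ω
  rw [← σ.apply_symm_apply ω, marginalVector_apply, prefSet_succ,
    sum_insert (apply_notMem_prefSet σ _), add_sub_cancel_right]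

theorem IsSupermodular.le_sum_marginalVector {m : Finset Ω → ℝ} (hm : IsSupermodular m)
    (hm₀ : m ∅ = 0) (A : Finset Ω) : m A ≤ ∑ ω ∈ A, marginalVector σ m ω := by
  suffices h : ∀ k ≤ Fintype.card Ω,
      m (A ∩ prefSet σ k) ≤ ∑ ω ∈ A ∩ prefSet σ k, marginalVector σ m ω by
    simpa using h _ le_rfl
  intro k hk
  induction k with
  | zero => simp [hm₀]
  | succ k ih =>
    let i : Fin (Fintype.card Ω) := ⟨k, hk⟩
    have hsucc : prefSet σ (k + 1) = insert (σ i) (prefSet σ k) := prefSet_succ σ i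
    have hi : σ i ∉ prefSet σ k := apply_notMem_prefSet σ i
    by_cases hA : σ i ∈ A
    · rw [hsucc, inter_insert_of_mem hA, sum_insert fun h => hi (mem_of_mem_inter_right h)]
      have hgain := hm.insert_sub_le_insert_sub (inter_subset_right (s₁ := A)) hi
      have hP : marginalVector σ m (σ i) = m (insert (σ i) (prefSet σ k)) - m (prefSet σ k) := by
        rw [marginalVector_apply, prefSet_succ]
      linarith [ih (Nat.le_of_succ_le hk)]
    · rw [hsucc, inter_insert_of_notMem hA]
      exact ih (Nat.le_of_succ_le hk)

theorem marginalVector_memCore {m : Finset Ω → ℝ} (hm : IsCapacity m) (hsm : IsSupermodular m) :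
    memCore m (marginalVector σ m) :=
  ⟨⟨marginalVector_nonneg σ hm.2.2, by rw [sum_marginalVector, hm.1, hm.2.1, sub_zero]⟩,
    hsm.le_sum_marginalVector σ hm.1⟩

theorem sum_range_mul_sub_nonneg {F g : ℕ → ℝ} {n : ℕ} (hF : ∀ i, i + 1 < n → F (i + 1) ≤ F i)
    (hg : ∀ i, 0 ≤ g i) (hg₀ : g 0 = 0) (hgn : g n = 0) :
    0 ≤ ∑ i ∈ range n, F i * (g (i + 1) - g i) := by
  have abel := sum_range_by_parts F (fun i => g (i + 1) - g i) n
  simp only [smul_eq_mul, sum_range_sub g, hg₀, hgn, sub_zero, mul_zero, zero_sub] at abel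
  rw [abel, neg_nonneg]
  refine sum_nonpos fun i hi => mul_nonpos_of_nonpos_of_nonneg ?_ (hg _)
  exact sub_nonpos.2 (hF i (by rw [mem_range] at hi; omega))

theorem choquetSum_nonneg {g : Finset Ω → ℝ} {f : Ω → ℝ} (hf : Antitone (f ∘ σ))
    (hg : ∀ A, 0 ≤ g A) (hg₀ : g ∅ = 0) (hg₁ : g univ = 0) : 0 ≤ choquetSum g f σ := by
  let F : ℕ → ℝ := fun k => if h : k < Fintype.card Ω then f (σ ⟨k, h⟩) else 0
  have hF : ∀ i, i + 1 < Fintype.card Ω → F (i + 1) ≤ F i := fun i hi => by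
    simp only [F, dif_pos hi, dif_pos (Nat.lt_of_succ_lt hi)]
    exact hf (Fin.mk_le_mk.2 (Nat.le_succ i))
  have hsum := Fin.sum_univ_eq_sum_range (fun i => F i * (g (prefSet σ (i + 1)) - g (prefSet σ i)))
    (Fintype.card Ω)
  simp only [F, Fin.is_lt, dif_pos, Fin.eta] at hsum
  rw [choquetSum, hsum]
  exact sum_range_mul_sub_nonneg hF (fun _ => hg _) (by simp [hg₀]) (by simp [hg₁])

theorem choquetSum_mono {μ ν : Finset Ω → ℝ} {f : Ω → ℝ} (hf : Antitone (f ∘ σ))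
    (hμν : ∀ A, μ A ≤ ν A) (h₀ : μ ∅ = ν ∅) (h₁ : μ univ = ν univ) :
    choquetSum μ f σ ≤ choquetSum ν f σ := by
  have hsub : choquetSum ν f σ - choquetSum μ f σ = choquetSum (fun A => ν A - μ A) f σ := by
    simp only [choquetSum, ← sum_sub_distrib]
    exact sum_congr rfl fun _ _ => by ring
  have := choquetSum_nonneg σ hf (g := fun A => ν A - μ A) (fun A => sub_nonneg.2 (hμν A))
    (by simp [h₀]) (by simp [h₁])
  linarith

end Choquet

theorem antitone_comp_sortedEquiv {Ω : Type*} [Fintype Ω] (f : Ω → ℝ) :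
    Antitone (f ∘ sortedEquiv f) := fun i j hij => by
  simpa [sortedEquiv] using Tuple.monotone_sort (fun k => -f ((Fintype.equivFin Ω).symm k)) hij

theorem choquet_le_sum_mul_of_memCore {Ω : Type*} [Fintype Ω] [DecidableEq Ω]
    {m : Finset Ω → ℝ} (hm₀ : m ∅ = 0) (hm₁ : m univ = 1) (f : Ω → ℝ) {P : Ω → ℝ}
    (hP : memCore m P) : choquet m f ≤ ∑ ω, P ω * f ω := by
  calc choquet m f ≤ choquetSum (fun A => ∑ ω ∈ A, P ω) f (sortedEquiv f) :=
        choquetSum_mono _ (antitone_comp_sortedEquiv f) hP.2 (by simp [hm₀]) (by simp [hm₁, hP.1.2])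
    _ = ∑ ω, P ω * f ω := by
        rw [choquetSum_eq_sum_marginalVector_mul, marginalVector_sum]

theorem choquet_eq_min_core_general {Ω : Type*} [Fintype Ω] [DecidableEq Ω]
    (m : Finset Ω → ℝ) (hm : IsCapacity m) (hsm : IsSupermodular m) (f : Ω → ℝ) :
    (∃ P : Ω → ℝ, memCore m P ∧ ∑ ω, P ω * f ω = choquet m f) ∧
    (∀ P : Ω → ℝ, memCore m P → choquet m f ≤ ∑ ω, P ω * f ω) :=
  ⟨⟨marginalVector (sortedEquiv f) m, marginalVector_memCore _ hm hsm,
      (choquetSum_eq_sum_marginalVector_mul _ m f).symm⟩,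
    fun _ hP => choquet_le_sum_mul_of_memCore hm.1 hm.2.1 f hP⟩

/-- for supermodular capacities, the Choquet integral is the minimum
of expectations over the core, and the minimum is attained. -/
theorem choquet_eq_min_core {Ω : Type*} [Fintype Ω] [DecidableEq Ω] [Nonempty Ω]
    (m : Finset Ω → ℝ) (hm : IsCapacity m) (hsm : IsSupermodular m) (f : Ω → ℝ) :
    (∃ P : Ω → ℝ, memCore m P ∧ ∑ ω, P ω * f ω = choquet m f) ∧
    (∀ P : Ω → ℝ, memCore m P → choquet m f ≤ ∑ ω, P ω * f ω) :=
  choquet_eq_min_core_general m hm hsm f
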